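/- arXiv:1302.4098 — 8 statements merged into one kernel-verified Lean document; each statement's English description precedes it below -/
import Mathlib

section
/- Let v₊ < 0, μ₊, λ₊ : [0,∞) → ℝ continuous, nonnegative, with compact support, and define γ_cr⁺ = −v₊⁻¹ ∫₀^∞ λ₊(x) exp((1/v₊)∫₀ˣ μ₊(y)dy) dx. Then the solution ρ₊(r) = exp(−(1/v₊)∫₀ʳ μ₊) · (γ₊ + v₊⁻¹ ∫₀ʳ λ₊(x) exp((1/v₊)∫₀ˣ μ₊) dx) of the stationary equation is nonnegative for all r ≥ 0 if and only if γ₊ ≥ γ_cr⁺. -/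
/-! With `g x = λ₊(x) exp((1/v₊)∫₀ˣ μ₊) ≥ 0`, the exponential prefactor is positive and `v₊ < 0`, so
`ρ₊(r) ≥ 0` iff `γ₊ ≥ -v₊⁻¹ ∫₀ʳ g`. The right side is bounded by `γ_cr⁺` and attains it as soon
as `r` exceeds the support of `λ₊`. -/

open Real MeasureTheory Set Filter

theorem intervalIntegral_le_integral_Ioi {g : ℝ → ℝ} {a r : ℝ}
    (hg : IntegrableOn g (Ioi a)) (hg0 : ∀ x ∈ Ioi a, 0 ≤ g x) (har : a ≤ r) :
    ∫ x in a..r, g x ≤ ∫ x in Ioi a, g x := by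
  rw [intervalIntegral.integral_of_le har]
  refine setIntegral_mono_set hg ?_ Ioc_subset_Ioi_self.eventuallyLE
  exact (ae_restrict_iff' measurableSet_Ioi).mpr (ae_of_all _ hg0)

theorem HasCompactSupport.eventually_intervalIntegral_eq_integral_Ioi {g : ℝ → ℝ}
    (hg : HasCompactSupport g) (a : ℝ) :
    ∀ᶠ r in atTop, ∫ x in a..r, g x = ∫ x in Ioi a, g x := by
  obtain ⟨R, hR⟩ := hg.isCompact.bddAbove
  filter_upwards [eventually_ge_atTop (max R a)] with r hr
  rw [intervalIntegral.integral_of_le (le_of_max_le_right hr),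
    setIntegral_eq_of_subset_of_forall_sdiff_eq_zero measurableSet_Ioi Ioc_subset_Ioi_self]
  rintro x ⟨hax, hxr⟩
  refine image_eq_zero_of_notMem_tsupport fun hx => hxr ⟨hax, ?_⟩
  exact (hR hx).trans (le_of_max_le_left hr)

theorem plus_density_nonneg_iff_critical_general
    (vp : ℝ) (hvp : vp < 0) (μp lp : ℝ → ℝ)
    (hμc : Continuous μp) (hlc : Continuous lp)
    (hl0 : ∀ r, 0 ≤ r → 0 ≤ lp r)
    (hls : HasCompactSupport lp)
    (γp : ℝ) :
    let γcr : ℝ := -vp⁻¹ * ∫ x in Ioi (0:ℝ),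
      lp x * Real.exp ((1 / vp) * ∫ y in (0:ℝ)..x, μp y)
    let ρ : ℝ → ℝ := fun r =>
      Real.exp (-(1 / vp) * ∫ x in (0:ℝ)..r, μp x) *
        (γp + vp⁻¹ * ∫ x in (0:ℝ)..r,
          lp x * Real.exp ((1 / vp) * ∫ y in (0:ℝ)..x, μp y))
    (∀ r, 0 ≤ r → 0 ≤ ρ r) ↔ γcr ≤ γp := by
  intro γcr ρ
  set g : ℝ → ℝ := fun x => lp x * Real.exp ((1 / vp) * ∫ y in (0:ℝ)..x, μp y)
  have hgc : Continuous g :=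
    hlc.mul <| continuous_exp.comp <| continuous_const.mul <|
      intervalIntegral.continuous_primitive hμc.intervalIntegrable 0
  have hgs : HasCompactSupport g := hls.mul_right
  have hc : 0 < -vp⁻¹ := neg_pos.mpr (inv_lt_zero.mpr hvp)
  have hρ (r : ℝ) : 0 ≤ ρ r ↔ -vp⁻¹ * ∫ x in (0:ℝ)..r, g x ≤ γp := by
    simp only [ρ, mul_nonneg_iff_of_pos_left (exp_pos _)]
    constructor <;> intro h <;> linarith
  simp only [hρ]
  constructor
  · intro h
    obtain ⟨r, hr, hr0⟩ :=
      ((hgs.eventually_intervalIntegral_eq_integral_Ioi 0).and (eventually_ge_atTop 0)).exists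
    simpa only [hr] using h r hr0
  · intro h r hr
    refine le_trans (mul_le_mul_of_nonneg_left ?_ hc.le) h
    exact intervalIntegral_le_integral_Ioi (hgc.integrable_of_hasCompactSupport hgs).integrableOn
      (fun x hx => mul_nonneg (hl0 x (le_of_lt hx)) (exp_nonneg _)) hr

/-- The stationary (+)-density is nonnegative on `[0,∞)` iff `γ₊ ≥ γ_cr⁺`, where
`γ_cr⁺ = −v₊⁻¹ ∫₀^∞ λ₊(x) exp((1/v₊)∫₀ˣ μ₊) dx`. -/
theorem plus_density_nonneg_iff_critical
    (vp : ℝ) (hvp : vp < 0) (μp lp : ℝ → ℝ)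
    (hμc : Continuous μp) (hlc : Continuous lp)
    (hμ0 : ∀ r, 0 ≤ r → 0 ≤ μp r) (hl0 : ∀ r, 0 ≤ r → 0 ≤ lp r)
    (hμs : HasCompactSupport μp) (hls : HasCompactSupport lp)
    (γp : ℝ) :
    let γcr : ℝ := -vp⁻¹ * ∫ x in Ioi (0:ℝ),
      lp x * Real.exp ((1 / vp) * ∫ y in (0:ℝ)..x, μp y)
    let ρ : ℝ → ℝ := fun r =>
      Real.exp (-(1 / vp) * ∫ x in (0:ℝ)..r, μp x) *
        (γp + vp⁻¹ * ∫ x in (0:ℝ)..r,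
          lp x * Real.exp ((1 / vp) * ∫ y in (0:ℝ)..x, μp y))
    (∀ r, 0 ≤ r → 0 ≤ ρ r) ↔ γcr ≤ γp :=
  plus_density_nonneg_iff_critical_general vp hvp μp lp hμc hlc hl0 hls γp
end

section
/- Let v₋ > 0, μ₋, λ₋ : [0,∞) → ℝ continuous, nonnegative, compactly supported, and define γ_cr⁻ = v₋⁻¹ ∫₀^∞ λ₋(x) exp(−(1/v₋)∫₀ˣ μ₋(y)dy) dx. Then the solution ρ₋(r) = v₋⁻¹ exp((1/v₋)∫₀ʳ μ₋) · (v₋γ₋ − ∫₀ʳ λ₋(x) exp(−(1/v₋)∫₀ˣ μ₋) dx) of v₋ ρ₋' − μ₋ ρ₋ + λ₋ = 0 with ρ₋(0) = γ₋ is nonnegative for all r ≥ 0 if and only if γ₋ ≥ γ_cr⁻. -/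
open Real MeasureTheory Set

/-- The stationary (−)-density
`ρ₋(r) = v₋⁻¹ exp((1/v₋)∫₀ʳ μ₋) (v₋γ₋ − ∫₀ʳ λ₋(x) exp(−(1/v₋)∫₀ˣ μ₋) dx)`
is nonnegative on `[0,∞)` iff `γ₋ ≥ γ_cr⁻`, where
`γ_cr⁻ = v₋⁻¹ ∫₀^∞ λ₋(x) exp(−(1/v₋)∫₀ˣ μ₋) dx`. -/
theorem minus_density_nonneg_iff_critical
    (vm : ℝ) (hvm : 0 < vm) (μm lm : ℝ → ℝ)
    (hμc : Continuous μm) (hlc : Continuous lm)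
    (hμ0 : ∀ r, 0 ≤ r → 0 ≤ μm r) (hl0 : ∀ r, 0 ≤ r → 0 ≤ lm r)
    (hμs : HasCompactSupport μm) (hls : HasCompactSupport lm)
    (γm : ℝ) :
    let γcr : ℝ := vm⁻¹ * ∫ x in Ioi (0:ℝ),
      lm x * Real.exp (-(1 / vm) * ∫ y in (0:ℝ)..x, μm y)
    let ρ : ℝ → ℝ := fun r =>
      vm⁻¹ * Real.exp ((1 / vm) * ∫ x in (0:ℝ)..r, μm x) *
        (vm * γm - ∫ x in (0:ℝ)..r,
          lm x * Real.exp (-(1 / vm) * ∫ y in (0:ℝ)..x, μm y))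
    (∀ r, 0 ≤ r → 0 ≤ ρ r) ↔ γcr ≤ γm := by
  intro γcr ρ
  set f : ℝ → ℝ := fun x => lm x * Real.exp (-(1 / vm) * ∫ y in (0:ℝ)..x, μm y) with hf
  have hprim : Continuous fun x : ℝ => ∫ y in (0:ℝ)..x, μm y :=
    intervalIntegral.continuous_primitive (fun a b => hμc.intervalIntegrable a b) 0
  have hfc : Continuous f := hlc.mul (Real.continuous_exp.comp (continuous_const.mul hprim))
  have hfs : HasCompactSupport f := hls.mul_right
  have hfi : Integrable f := hfc.integrable_of_hasCompactSupport hfs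
  have hf0 : ∀ x ∈ Ioi (0:ℝ), 0 ≤ f x := fun x hx =>
    mul_nonneg (hl0 x (le_of_lt hx)) (Real.exp_pos _).le
  set I : ℝ := ∫ x in Ioi (0:ℝ), f x with hI
  -- for every r ≥ 0, ∫₀ʳ f ≤ I
  have hle : ∀ r, 0 ≤ r → (∫ x in (0:ℝ)..r, f x) ≤ I := by
    intro r hr
    rw [intervalIntegral.integral_of_le hr]
    exact setIntegral_mono_set hfi.integrableOn
      ((ae_restrict_iff' measurableSet_Ioi).2 (Filter.Eventually.of_forall hf0))
      (HasSubset.Subset.eventuallyLE Ioc_subset_Ioi_self)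
  -- there is r0 ≥ 0 with ∫₀^{r0} f = I
  obtain ⟨R, hR⟩ := (hls.isCompact.isBounded).subset_closedBall 0
  set r0 : ℝ := max R 0 with hr0def
  have hr0 : 0 ≤ r0 := le_max_right _ _
  have hzero : ∀ x ∈ Ioi r0, f x = 0 := by
    intro x hx
    have hx' : x ∉ tsupport lm := by
      intro hmem
      have := hR hmem
      simp only [Metric.mem_closedBall, Real.dist_eq, sub_zero] at this
      have : x ≤ R := (abs_le.mp this).2
      exact absurd (lt_of_le_of_lt (le_trans this (le_max_left R 0)) hx) (lt_irrefl x)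
    simp [hf, image_eq_zero_of_notMem_tsupport hx']
  have hIeq : (∫ x in (0:ℝ)..r0, f x) = I := by
    rw [intervalIntegral.integral_of_le hr0, hI]
    have hunion : Ioc (0:ℝ) r0 ∪ Ioi r0 = Ioi 0 := Ioc_union_Ioi_eq_Ioi hr0
    rw [← hunion, setIntegral_union (Ioc_disjoint_Ioi le_rfl) measurableSet_Ioi
      hfi.integrableOn hfi.integrableOn,
      setIntegral_eq_zero_of_forall_eq_zero hzero, add_zero]
  have hγcr : vm * γcr = I := by
    simp only [γcr, ← hf, ← hI]
    field_simp
  constructor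
  · intro h
    have h0 := h r0 hr0
    have hpos : 0 < vm⁻¹ * Real.exp ((1 / vm) * ∫ x in (0:ℝ)..r0, μm x) :=
      mul_pos (inv_pos.mpr hvm) (Real.exp_pos _)
    have h1 : 0 ≤ vm * γm - ∫ x in (0:ℝ)..r0, f x := by
      by_contra hc
      push_neg at hc
      have := mul_neg_of_pos_of_neg hpos hc
      simp only [ρ, ← hf] at h0
      linarith
    rw [hIeq, ← hγcr] at h1
    nlinarith
  · intro hγ r hr
    have h1 : (∫ x in (0:ℝ)..r, f x) ≤ vm * γm := by
      calc (∫ x in (0:ℝ)..r, f x) ≤ I := hle r hr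
        _ = vm * γcr := hγcr.symm
        _ ≤ vm * γm := by nlinarith
    have hpos : 0 < vm⁻¹ * Real.exp ((1 / vm) * ∫ x in (0:ℝ)..r, μm x) :=
      mul_pos (inv_pos.mpr hvm) (Real.exp_pos _)
    simp only [ρ, ← hf]
    exact mul_nonneg hpos.le (by linarith)
end

section
/- Let v₊ < 0 < v₋, and let μ₊, λ₊ be continuous nonnegative functions with support in [0, R₀]. Suppose γ₊ ≥ γ_cr⁺ where γ_cr⁺ = −v₊⁻¹ ∫₀^∞ λ₊(x) exp((1/v₊)∫₀ˣ μ₊)dx. Then the stationary density ρ₊(r) = exp(−(1/v₊)∫₀ʳ μ₊)(γ₊ + v₊⁻¹∫₀ʳ λ₊(x)exp((1/v₊)∫₀ˣ μ₊)dx) satisfies ∫₀^∞ ρ₊(r) dr < ∞ if and only if γ₊ = γ_cr⁺. -/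
open Real MeasureTheory Set

/-! Past `R₀` both rates vanish, so the primitives in `ρ₊` equal the integrals over `(0, ∞)` and
`ρ₊` is the constant `exp (-(1/v₊) ∫₀^∞ μ₊) · (γ₊ - γ_cr⁺)` there. A function integrable on
bounded intervals and eventually constant is integrable on a half-line exactly when that
constant is zero, and the exponential factor never vanishes. -/

lemma intervalIntegral_eq_integral_Ioi_of_forall_gt {E : Type*} [NormedAddCommGroup E]
    [NormedSpace ℝ E] {f : ℝ → E} {a r : ℝ}
    (hf : IntervalIntegrable f volume a r) (hfr : ∀ x, r < x → f x = 0) :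
    ∫ x in a..r, f x = ∫ x in Ioi a, f x := by
  have hIoi : ∫ x in Ioi r, f x = 0 := setIntegral_eq_zero_of_forall_eq_zero hfr
  have hint : IntegrableOn f (Ioi r) :=
    (integrableOn_congr_fun (fun x hx => hfr x hx) measurableSet_Ioi).2 integrableOn_zero
  rw [← intervalIntegral.integral_interval_add_Ioi' hf hint, hIoi, add_zero]

lemma integrableOn_Ioi_iff_of_forall_gt_eq {E : Type*} [NormedAddCommGroup E]
    {f : ℝ → E} {a R : ℝ} {c : E} (haR : a ≤ R) (hf : IntegrableOn f (Ioc a R))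
    (hfc : ∀ x, R < x → f x = c) :
    IntegrableOn f (Ioi a) ↔ c = 0 := by
  rw [← Ioc_union_Ioi_eq_Ioi haR, integrableOn_union, and_iff_right hf,
    integrableOn_congr_fun (fun x (hx : x ∈ Ioi R) => hfc x hx) measurableSet_Ioi,
    integrableOn_const_iff, Real.volume_Ioi]
  simp

theorem plus_density_finite_mass_iff_general
    (vp R₀ : ℝ)
    (μp lp : ℝ → ℝ)
    (hμc : Continuous μp) (hlc : Continuous lp)
    (hμs : ∀ r, r ∉ Icc (0:ℝ) R₀ → μp r = 0)
    (hls : ∀ r, r ∉ Icc (0:ℝ) R₀ → lp r = 0)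
    (γp : ℝ)
    (γcr : ℝ)
    (hγcr : γcr = -vp⁻¹ * ∫ x in Ioi (0:ℝ),
      lp x * Real.exp ((1 / vp) * ∫ y in (0:ℝ)..x, μp y)) :
    let ρ : ℝ → ℝ := fun r =>
      Real.exp (-(1 / vp) * ∫ x in (0:ℝ)..r, μp x) *
        (γp + vp⁻¹ * ∫ x in (0:ℝ)..r,
          lp x * Real.exp ((1 / vp) * ∫ y in (0:ℝ)..x, μp y))
    IntegrableOn ρ (Ioi (0:ℝ)) ↔ γp = γcr := by
  intro ρ
  set R := max R₀ 0
  have vanish : ∀ f : ℝ → ℝ, (∀ r, r ∉ Icc (0:ℝ) R₀ → f r = 0) → ∀ x, R < x → f x = 0 :=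
    fun f hf x hx => hf x fun h => h.2.not_gt ((le_max_left R₀ 0).trans_lt hx)
  have hFc : Continuous fun r => ∫ x in (0:ℝ)..r, μp x :=
    intervalIntegral.continuous_primitive (fun a b => hμc.intervalIntegrable a b) 0
  set g : ℝ → ℝ := fun x => lp x * Real.exp ((1 / vp) * ∫ y in (0:ℝ)..x, μp y)
  have hgc : Continuous g := by fun_prop
  have hGc : Continuous fun r => ∫ x in (0:ℝ)..r, g x :=
    intervalIntegral.continuous_primitive (fun a b => hgc.intervalIntegrable a b) 0
  have hρc : Continuous ρ := by fun_prop
  have tail : ∀ r, R < r →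
      ρ r = Real.exp (-(1 / vp) * ∫ x in Ioi (0:ℝ), μp x) * (γp - γcr) := by
    intro r hr
    have hR : ∀ x, r < x → R < x := fun x hx => hr.trans hx
    simp only [ρ, hγcr]
    rw [intervalIntegral_eq_integral_Ioi_of_forall_gt (hμc.intervalIntegrable 0 r)
        fun x hx => vanish μp hμs x (hR x hx),
      intervalIntegral_eq_integral_Ioi_of_forall_gt (hgc.intervalIntegrable 0 r)
        fun x hx => by simp [g, vanish lp hls x (hR x hx)]]
    ring
  rw [integrableOn_Ioi_iff_of_forall_gt_eq (le_max_right R₀ 0) hρc.integrableOn_Ioc tail,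
    mul_eq_zero, sub_eq_zero, or_iff_right (Real.exp_ne_zero _)]

/-- A stationary (+)-density with `γ₊ ≥ γ_cr⁺` has finite total mass
`∫₀^∞ ρ₊(r) dr < ∞` if and only if `γ₊ = γ_cr⁺`. -/
theorem plus_density_finite_mass_iff
    (vp vm R₀ : ℝ) (hvp : vp < 0) (hvm : 0 < vm) (hR₀ : 0 < R₀)
    (μp lp : ℝ → ℝ)
    (hμc : Continuous μp) (hlc : Continuous lp)
    (hμ0 : ∀ r, 0 ≤ μp r) (hl0 : ∀ r, 0 ≤ lp r)
    (hμs : ∀ r, r ∉ Icc (0:ℝ) R₀ → μp r = 0)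
    (hls : ∀ r, r ∉ Icc (0:ℝ) R₀ → lp r = 0)
    (γp : ℝ)
    (γcr : ℝ)
    (hγcr : γcr = -vp⁻¹ * ∫ x in Ioi (0:ℝ),
      lp x * Real.exp ((1 / vp) * ∫ y in (0:ℝ)..x, μp y))
    (hγ : γcr ≤ γp) :
    let ρ : ℝ → ℝ := fun r =>
      Real.exp (-(1 / vp) * ∫ x in (0:ℝ)..r, μp x) *
        (γp + vp⁻¹ * ∫ x in (0:ℝ)..r,
          lp x * Real.exp ((1 / vp) * ∫ y in (0:ℝ)..x, μp y))
    IntegrableOn ρ (Ioi (0:ℝ)) ↔ γp = γcr :=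
  plus_density_finite_mass_iff_general vp R₀ μp lp hμc hlc hμs hls γp γcr hγcr
end

section
/- Let v₊ < 0 < v₋, σ₊, σ₋ > 0, α₊₋, α₋₊ ∈ [0,1). If σ₊α₊₋ − σ₋α₋₊ ≠ 0, the quadratic equation (σ₊α₊₋ − σ₋α₋₊)(−v₊ + β)(v₋ − β) + (σ₋v₊ − σ₊v₋)β − v₊v₋(σ₋ − σ₊) = 0 has exactly one root β in the open interval (v₊, v₋). -/
/-!
At `v₊` and `v₋` the quadratic takes the values `σ₋ v₊ (v₊ - v₋) > 0` and `σ₊ v₋ (v₊ - v₋) < 0`,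
so it has a root in between. A polynomial of degree at most two with two distinct roots
`r, s` factors as `a (x - r) (x - s)`, so it cannot change sign between two points lying
outside `[r, s]`; hence the root is unique.
-/

open Set

theorem quadratic_eq_mul_sub_mul_sub {R : Type*} [CommRing R] [IsDomain R] {a b c r s : R}
    (hr : a * r ^ 2 + b * r + c = 0) (hs : a * s ^ 2 + b * s + c = 0) (hrs : r ≠ s) (x : R) :
    a * x ^ 2 + b * x + c = a * (x - r) * (x - s) := by
  have hb : b = -a * (r + s) :=
    mul_left_cancel₀ (sub_ne_zero.mpr hrs) (by linear_combination hr - hs)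
  linear_combination hr + (x - r) * hb

theorem quadratic_mul_quadratic_nonneg_of_roots_mem_Ioo {K : Type*} [CommRing K] [LinearOrder K]
    [IsStrictOrderedRing K] {a b c r s p m : K}
    (hr : a * r ^ 2 + b * r + c = 0) (hs : a * s ^ 2 + b * s + c = 0) (hrs : r ≠ s)
    (hr_mem : r ∈ Ioo p m) (hs_mem : s ∈ Ioo p m) :
    0 ≤ (a * p ^ 2 + b * p + c) * (a * m ^ 2 + b * m + c) := by
  rw [quadratic_eq_mul_sub_mul_sub hr hs hrs, quadratic_eq_mul_sub_mul_sub hr hs hrs]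
  have hp : 0 < (p - r) * (p - s) :=
    mul_pos_of_neg_of_neg (sub_neg.mpr hr_mem.1) (sub_neg.mpr hs_mem.1)
  have hm : 0 < (m - r) * (m - s) := mul_pos (sub_pos.mpr hr_mem.2) (sub_pos.mpr hs_mem.2)
  calc (0 : K) ≤ a ^ 2 * ((p - r) * (p - s) * ((m - r) * (m - s))) := by positivity
    _ = _ := by ring

theorem exists_mem_Ioo_eq_zero_of_mul_neg {α δ : Type*} [ConditionallyCompleteLinearOrder α]
    [TopologicalSpace α] [OrderTopology α] [DenselyOrdered α] [Ring δ] [LinearOrder δ]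
    [IsStrictOrderedRing δ] [TopologicalSpace δ] [OrderClosedTopology δ] {f : α → δ} {p m : α}
    (hpm : p ≤ m) (hf : ContinuousOn f (Icc p m)) (hsign : f p * f m < 0) :
    ∃ x ∈ Ioo p m, f x = 0 := by
  rcases mul_neg_iff.mp hsign with ⟨hp, hm⟩ | ⟨hp, hm⟩
  · exact intermediate_value_Ioo' hpm hf ⟨hm, hp⟩
  · exact intermediate_value_Ioo hpm hf ⟨hp, hm⟩

theorem existsUnique_root_mem_Ioo_of_quadratic {f : ℝ → ℝ} {a b c p m : ℝ}
    (hf : ∀ x, f x = a * x ^ 2 + b * x + c) (hpm : p < m) (hsign : f p * f m < 0) :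
    ∃! x, x ∈ Ioo p m ∧ f x = 0 := by
  have hcont : Continuous f := by
    rw [funext hf]
    fun_prop
  obtain ⟨r, hr_mem, hr⟩ := exists_mem_Ioo_eq_zero_of_mul_neg hpm.le hcont.continuousOn hsign
  refine ⟨r, ⟨hr_mem, hr⟩, fun s ⟨hs_mem, hs⟩ => ?_⟩
  by_contra hsr
  rw [hf] at hr hs
  simp only [hf] at hsign
  exact hsign.not_ge (quadratic_mul_quadratic_nonneg_of_roots_mem_Ioo hs hr hsr hs_mem hr_mem)

theorem quadratic_unique_root_in_interval_general
    (vp vm σp σm apm amp : ℝ)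
    (hvp : vp < 0) (hvm : 0 < vm) (hσp : 0 < σp) (hσm : 0 < σm) :
    ∃! β : ℝ, β ∈ Ioo vp vm ∧
      (σp * apm - σm * amp) * (-vp + β) * (vm - β)
        + (σm * vp - σp * vm) * β - vp * vm * (σm - σp) = 0 := by
  refine existsUnique_root_mem_Ioo_of_quadratic (a := -(σp * apm - σm * amp))
    (b := (σp * apm - σm * amp) * (vp + vm) + (σm * vp - σp * vm))
    (c := -(σp * apm - σm * amp) * vp * vm - vp * vm * (σm - σp)) (fun β => by ring)
    (hvp.trans hvm) ?_
  calc _ = σm * σp * (vp * vm) * (vp - vm) ^ 2 := by ring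
    _ < 0 := mul_neg_of_neg_of_pos
        (mul_neg_of_pos_of_neg (by positivity) (mul_neg_of_neg_of_pos hvp hvm))
        (sq_pos_of_neg (sub_neg.mpr (hvp.trans hvm)))

/-- The quadratic stationary boundary-velocity equation of the one-market model with
recycling has exactly one root in the open interval `(v₊, v₋)` when its leading
coefficient `σ₊α₊₋ − σ₋α₋₊` is nonzero. -/
theorem quadratic_unique_root_in_interval
    (vp vm σp σm apm amp : ℝ)
    (hvp : vp < 0) (hvm : 0 < vm) (hσp : 0 < σp) (hσm : 0 < σm)
    (hapm : apm ∈ Ico (0:ℝ) 1) (hamp : amp ∈ Ico (0:ℝ) 1)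
    (hne : σp * apm - σm * amp ≠ 0) :
    ∃! β : ℝ, β ∈ Ioo vp vm ∧
      (σp * apm - σm * amp) * (-vp + β) * (vm - β)
        + (σm * vp - σp * vm) * β - vp * vm * (σm - σp) = 0 :=
  quadratic_unique_root_in_interval_general vp vm σp σm apm amp hvp hvm hσp hσm
end

section
/- Let v₊ < 0 < v₋, σ₊, σ₋ > 0, α₊₋, α₋₊ ∈ [0,1), and let β ∈ (v₊, v₋) satisfy the quadratic stationary equation (σ₊α₊₋ − σ₋α₋₊)(−v₊+β)(v₋−β) + (σ₋v₊ − σ₊v₋)β − v₊v₋(σ₋−σ₊) = 0. Define γ₊ = σ₊/(−v₊(1−α₋₊) − βα₋₊) and γ₋ = σ₋/(v₋(1−α₊₋) + βα₊₋). Then γ₊ > 0 and γ₋ > 0. -/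
open Set

/-- If `β ∈ (v₊, v₋)` solves the quadratic stationary equation, then the back-substituted
boundary densities `γ₊ = σ₊/(−v₊(1−α₋₊) − βα₋₊)` and `γ₋ = σ₋/(v₋(1−α₊₋) + βα₊₋)`
are positive. -/
theorem stationary_boundary_densities_positive
    (vp vm σp σm apm amp β : ℝ)
    (hvp : vp < 0) (hvm : 0 < vm) (hσp : 0 < σp) (hσm : 0 < σm)
    (hapm : apm ∈ Ico (0:ℝ) 1) (hamp : amp ∈ Ico (0:ℝ) 1)
    (hβ : β ∈ Ioo vp vm)
    (heq : (σp * apm - σm * amp) * (-vp + β) * (vm - β)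
        + (σm * vp - σp * vm) * β - vp * vm * (σm - σp) = 0) :
    0 < σp / (-vp * (1 - amp) - β * amp) ∧
    0 < σm / (vm * (1 - apm) + β * apm) := by
  obtain ⟨hβ1, hβ2⟩ := hβ
  obtain ⟨hapm0, hapm1⟩ := hapm
  obtain ⟨hamp0, hamp1⟩ := hamp
  set Dp : ℝ := -vp * (1 - amp) - β * amp with hDp
  set Dm : ℝ := vm * (1 - apm) + β * apm with hDm
  have key : σp * (β - vp) * Dm = σm * (vm - β) * Dp := by
    rw [hDp, hDm]; linear_combination -heq
  have hDpb : -β < Dp := by nlinarith [sub_pos.mpr hβ1]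
  have hDmb : β < Dm := by nlinarith [sub_pos.mpr hβ2]
  have hp1 : 0 < σp * (β - vp) := by nlinarith
  have hp2 : 0 < σm * (vm - β) := by nlinarith
  have hDp0 : 0 < Dp := by
    rcases le_or_gt 0 β with h | h
    · have hDm0 : 0 < Dm := lt_of_le_of_lt h hDmb
      nlinarith
    · linarith
  have hDm0 : 0 < Dm := by nlinarith
  exact ⟨div_pos hσp hDp0, div_pos hσm hDm0⟩
end

section
/- Let v₊ < 0 < v₋, σ₊, σ₋ > 0, α₊₋, α₋₊ ∈ [0,1). The system of three equations −v₊γ₊ = σ₊ + (v₋−β)γ₋α₋₊, v₋γ₋ = σ₋ − (v₊−β)γ₊α₊₋, (v₋−β)γ₋ = −(v₊−β)γ₊, with unknowns γ₊, γ₋ ≥ 0 and β ∈ (v₊, v₋), has exactly one solution. -/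
/-!
Write `w = (β - v₊) γ₊ = (v₋ - β) γ₋` for the flux through the phase boundary. The first two
equations make `γ₊ = (σ₊ + α₋₊ w) / (-v₊)` and `γ₋ = (σ₋ + α₊₋ w) / v₋` affine in `w`, and the
third then says that the two relative speeds `β - v₊ = w / γ₊` and `v₋ - β = w / γ₋` add up to
`v₋ - v₊`. Each relative speed `c w / (σ + α w)` is continuous and strictly increasing in `w ≥ 0`,
vanishes at `0`, and reaches `c` once `(1 - α) w ≥ σ`, which is where `α < 1` enters. Hence the
balance equation has exactly one root `w > 0`, and it determines `(γ₊, γ₋, β)`.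
-/

open Set

/-- The speed `w / γ` of the phase boundary relative to a side whose boundary density is
`γ = (σ + a w) / c` when the flux through the boundary is `w`. -/
noncomputable def relSpeed (c σ a w : ℝ) : ℝ := c * w / (σ + a * w)

section relSpeed

variable {c σ a : ℝ}

lemma relSpeed_zero : relSpeed c σ a 0 = 0 := by
  simp [relSpeed]

lemma relSpeed_pos (hc : 0 < c) (hσ : 0 < σ) (ha : 0 ≤ a) {w : ℝ} (hw : 0 < w) :
    0 < relSpeed c σ a w :=
  div_pos (mul_pos hc hw) (by positivity)

lemma relSpeed_mul_density (hc : c ≠ 0) {w : ℝ} (hw : σ + a * w ≠ 0) :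
    relSpeed c σ a w * ((σ + a * w) / c) = w :=
  calc relSpeed c σ a w * ((σ + a * w) / c) = w * (c / c) * ((σ + a * w) / (σ + a * w)) := by
        unfold relSpeed; ring
    _ = w := by rw [div_self hc, div_self hw, mul_one, mul_one]

lemma strictMonoOn_relSpeed (hc : 0 < c) (hσ : 0 < σ) (ha : 0 ≤ a) :
    StrictMonoOn (relSpeed c σ a) (Ici 0) := by
  intro x (hx : 0 ≤ x) y (hy : 0 ≤ y) hxy
  unfold relSpeed
  rw [div_lt_div_iff₀ (by positivity) (by positivity)]
  nlinarith [mul_pos (mul_pos hc hσ) (sub_pos.2 hxy)]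

lemma continuousOn_relSpeed (hσ : 0 < σ) (ha : 0 ≤ a) :
    ContinuousOn (relSpeed c σ a) (Ici 0) := by
  refine ContinuousOn.div (by fun_prop) (by fun_prop) fun w (hw : 0 ≤ w) => ?_
  positivity

lemma le_relSpeed (hc : 0 ≤ c) (hσ : 0 < σ) (ha : 0 ≤ a) {w : ℝ} (hw : 0 ≤ w)
    (hlarge : σ ≤ (1 - a) * w) : c ≤ relSpeed c σ a w := by
  unfold relSpeed
  rw [le_div_iff₀ (by positivity)]
  nlinarith

end relSpeed

lemma existsUnique_relSpeed_add_relSpeed_eq {c₁ c₂ σ₁ σ₂ a₁ a₂ : ℝ}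
    (hc₁ : 0 < c₁) (hc₂ : 0 < c₂) (hσ₁ : 0 < σ₁) (hσ₂ : 0 < σ₂)
    (ha₁ : a₁ ∈ Ico (0 : ℝ) 1) (ha₂ : a₂ ∈ Ico (0 : ℝ) 1) :
    ∃! w : ℝ, 0 < w ∧ relSpeed c₁ σ₁ a₁ w + relSpeed c₂ σ₂ a₂ w = c₁ + c₂ := by
  obtain ⟨ha₁0, ha₁1⟩ := ha₁
  obtain ⟨ha₂0, ha₂1⟩ := ha₂
  set f : ℝ → ℝ := fun w => relSpeed c₁ σ₁ a₁ w + relSpeed c₂ σ₂ a₂ w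
  have hmono : StrictMonoOn f (Ici 0) :=
    (strictMonoOn_relSpeed hc₁ hσ₁ ha₁0).add (strictMonoOn_relSpeed hc₂ hσ₂ ha₂0)
  have hf0 : f 0 = 0 := by simp [f, relSpeed_zero]
  set M := σ₁ / (1 - a₁) + σ₂ / (1 - a₂)
  have hM₁ : σ₁ / (1 - a₁) ≤ M := le_add_of_nonneg_right (div_nonneg hσ₂.le (by linarith))
  have hM₂ : σ₂ / (1 - a₂) ≤ M := le_add_of_nonneg_left (div_nonneg hσ₁.le (by linarith))
  have hM : 0 ≤ M := (div_nonneg hσ₁.le (by linarith)).trans hM₁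
  have hfM : c₁ + c₂ ≤ f M :=
    add_le_add (le_relSpeed hc₁.le hσ₁ ha₁0 hM (by rwa [div_le_iff₀' (by linarith)] at hM₁))
      (le_relSpeed hc₂.le hσ₂ ha₂0 hM (by rwa [div_le_iff₀' (by linarith)] at hM₂))
  have hcont : ContinuousOn f (Icc 0 M) :=
    ((continuousOn_relSpeed hσ₁ ha₁0).add (continuousOn_relSpeed hσ₂ ha₂0)).mono
      Icc_subset_Ici_self
  obtain ⟨w, ⟨hw0, -⟩, hfw⟩ :=
    intermediate_value_Icc hM hcont ⟨hf0.trans_le (by positivity), hfM⟩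
  have hw : 0 < w := hw0.lt_of_ne <| by rintro rfl; linarith
  refine ⟨w, ⟨hw, hfw⟩, fun w' ⟨hw', hfw'⟩ => ?_⟩
  exact hmono.injOn (mem_Ici.2 hw'.le) (mem_Ici.2 hw0) (hfw'.trans hfw.symm)

section StationaryPoint

variable {vp vm σp σm apm amp : ℝ}

/-- `x = (γ₊, γ₋, β)` solves the stationary-point system. -/
def IsStationaryPoint (vp vm σp σm apm amp : ℝ) (x : ℝ × ℝ × ℝ) : Prop :=
  0 ≤ x.1 ∧ 0 ≤ x.2.1 ∧ x.2.2 ∈ Ioo vp vm ∧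
    -vp * x.1 = σp + (vm - x.2.2) * x.2.1 * amp ∧
    vm * x.2.1 = σm - (vp - x.2.2) * x.1 * apm ∧
    (vm - x.2.2) * x.2.1 = -(vp - x.2.2) * x.1

noncomputable def fluxPoint (vp vm σp σm apm amp w : ℝ) : ℝ × ℝ × ℝ :=
  ((σp + amp * w) / -vp, (σm + apm * w) / vm, vp + relSpeed (-vp) σp amp w)

lemma IsStationaryPoint.exists_flux (hvp : vp < 0) (hvm : 0 < vm) (hσp : 0 < σp)
    {x : ℝ × ℝ × ℝ} (hx : IsStationaryPoint vp vm σp σm apm amp x) :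
    ∃ w, 0 < w ∧ relSpeed (-vp) σp amp w + relSpeed vm σm apm w = -vp + vm ∧
      x = fluxPoint vp vm σp σm apm amp w := by
  obtain ⟨γp, γm, β⟩ := x
  obtain ⟨hγp, -, ⟨hβp, hβm⟩, eqp, eqm, eqflux⟩ := hx
  dsimp only at *
  set w := (β - vp) * γp with hw_def
  have hvp' : -vp ≠ 0 := neg_ne_zero.2 hvp.ne
  have hwm : (vm - β) * γm = w := by linear_combination eqflux
  have hγp : 0 < γp := by
    refine hγp.lt_of_ne' fun h => ?_
    have hwm0 : (vm - β) * γm = 0 := by rw [eqflux, h, mul_zero]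
    linarith [show σp = 0 by linear_combination -eqp - vp * h - amp * hwm0]
  have hw : 0 < w := mul_pos (sub_pos.2 hβp) hγp
  have hγm : 0 < γm := pos_of_mul_pos_right (hwm ▸ hw) (sub_pos.2 hβm).le
  have densp : σp + amp * w = -vp * γp := by linear_combination -eqp - amp * hwm
  have densm : σm + apm * w = vm * γm := by linear_combination -eqm + apm * hw_def
  have speedp : relSpeed (-vp) σp amp w = β - vp := by
    rw [relSpeed, densp, mul_div_mul_left _ _ hvp', div_eq_iff hγp.ne']
  have speedm : relSpeed vm σm apm w = vm - β := by
    rw [relSpeed, densm, mul_div_mul_left _ _ hvm.ne', div_eq_iff hγm.ne', hwm]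
  refine ⟨w, hw, by rw [speedp, speedm]; ring, ?_⟩
  simp only [fluxPoint, densp, densm, speedp, mul_div_cancel_left₀ _ hvp',
    mul_div_cancel_left₀ _ hvm.ne', add_sub_cancel]

lemma isStationaryPoint_fluxPoint (hvp : vp < 0) (hvm : 0 < vm) (hσp : 0 < σp) (hσm : 0 < σm)
    (hapm : 0 ≤ apm) (hamp : 0 ≤ amp) {w : ℝ} (hw : 0 < w)
    (hbalance : relSpeed (-vp) σp amp w + relSpeed vm σm apm w = -vp + vm) :
    IsStationaryPoint vp vm σp σm apm amp (fluxPoint vp vm σp σm apm amp w) := by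
  have hvp' : 0 < -vp := neg_pos.2 hvp
  have fluxp := relSpeed_mul_density (σ := σp) (a := amp) hvp'.ne' (w := w) (by positivity)
  have fluxm := relSpeed_mul_density (σ := σm) (a := apm) hvm.ne' (w := w) (by positivity)
  have speedp := relSpeed_pos hvp' hσp hamp hw
  have speedm := relSpeed_pos hvm hσm hapm hw
  have hβm : vm - (vp + relSpeed (-vp) σp amp w) = relSpeed vm σm apm w := by linarith
  simp only [IsStationaryPoint, fluxPoint, hβm, mem_Ioo]
  refine ⟨by positivity, by positivity, ⟨by linarith, by linarith⟩, ?_, ?_, ?_⟩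
  · rw [mul_div_cancel₀ _ hvp'.ne']
    linear_combination -amp * fluxm
  · rw [mul_div_cancel₀ _ hvm.ne']
    linear_combination -apm * fluxp
  · linear_combination fluxm - fluxp

end StationaryPoint

/-- The system characterising the stationary point with finite mass of the one-market
model with recycling has exactly one solution `(γ₊, γ₋, β)` with `γ₊, γ₋ ≥ 0` and
`β ∈ (v₊, v₋)`. -/
theorem stationary_point_system_unique_solution
    (vp vm σp σm apm amp : ℝ)
    (hvp : vp < 0) (hvm : 0 < vm) (hσp : 0 < σp) (hσm : 0 < σm)
    (hapm : apm ∈ Ico (0:ℝ) 1) (hamp : amp ∈ Ico (0:ℝ) 1) :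
    ∃! x : ℝ × ℝ × ℝ,
      0 ≤ x.1 ∧ 0 ≤ x.2.1 ∧ x.2.2 ∈ Ioo vp vm ∧
      -vp * x.1 = σp + (vm - x.2.2) * x.2.1 * amp ∧
      vm * x.2.1 = σm - (vp - x.2.2) * x.1 * apm ∧
      (vm - x.2.2) * x.2.1 = -(vp - x.2.2) * x.1 := by
  obtain ⟨w, ⟨hw, hbalance⟩, hunique⟩ :=
    existsUnique_relSpeed_add_relSpeed_eq (neg_pos.2 hvp) hvm hσp hσm hamp hapm
  refine ⟨fluxPoint vp vm σp σm apm amp w,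
    isStationaryPoint_fluxPoint hvp hvm hσp hσm hapm.1 hamp.1 hw hbalance, fun x hx => ?_⟩
  obtain ⟨w', hw', hbalance', rfl⟩ := IsStationaryPoint.exists_flux hvp hvm hσp hx
  rw [hunique w' ⟨hw', hbalance'⟩]
end

section
/- Let V be finite, and suppose the densities ρ₊,ₘ(r) = −v₊,ₘ⁻¹ exp(F₊^{(m)}(r))(s_m − ∫₀ʳ (λ₊,ₘ(x) + ∑_k s_k p_{km}(−,+,x)) exp(−F₊^{(m)}(x))dx) with compactly supported data. Then ρ₊,ₘ(r) ≥ 0 for all r ≥ 0 and all m if and only if for all m: s_m ≥ λ̂₊,ₘ + ∑_k s_k α_{km}(−,+), where λ̂₊,ₘ = ∫₀^∞ λ₊,ₘ(x) exp(−F₊^{(m)}(x))dx and α_{km}(−,+) = ∫₀^∞ p_{km}(−,+,x) exp(−F₊^{(m)}(x))dx. -/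
open Real MeasureTheory Set Finset

/-! Each density is a positive factor times `s_m - ∫₀ʳ g_m`, where `g_m` is integrable and
nonnegative on `(0, ∞)`. Hence `r ↦ ∫₀ʳ g_m` increases to `∫₀^∞ g_m = λ̂₊,ₘ + ∑_k s_k α_{km}`,
and it stays below `s_m` for every `r` exactly when its limit does. -/

theorem forall_intervalIntegral_le_iff_setIntegral_Ioi_le {g : ℝ → ℝ} {a : ℝ}
    (hg : IntegrableOn g (Ioi a)) (hg0 : ∀ x, a < x → 0 ≤ g x) (c : ℝ) :
    (∀ r, a ≤ r → ∫ x in a..r, g x ≤ c) ↔ ∫ x in Ioi a, g x ≤ c := by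
  constructor
  · intro h
    exact le_of_tendsto (intervalIntegral_tendsto_integral_Ioi a hg Filter.tendsto_id)
      (Filter.eventually_atTop.2 ⟨a, h⟩)
  · intro h r hr
    rw [intervalIntegral.integral_of_le hr]
    refine le_trans (setIntegral_mono_set hg ?_ Ioc_subset_Ioi_self.eventuallyLE) h
    exact (ae_restrict_iff' measurableSet_Ioi).2 (Filter.Eventually.of_forall hg0)

section WeightedSum

variable {ι α : Type*} [MeasurableSpace α] {μ : Measure α} (t : Finset ι) (c : ι → ℝ)
  {f w : α → ℝ} {g : ι → α → ℝ}

theorem integrable_add_sum_mul (hf : Integrable (fun x => f x * w x) μ)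
    (hg : ∀ k ∈ t, Integrable (fun x => g k x * w x) μ) :
    Integrable (fun x => (f x + ∑ k ∈ t, c k * g k x) * w x) μ := by
  simp only [add_mul, Finset.sum_mul, mul_assoc]
  exact hf.add (integrable_finsetSum _ fun k hk => (hg k hk).const_mul (c k))

theorem integral_add_sum_mul (hf : Integrable (fun x => f x * w x) μ)
    (hg : ∀ k ∈ t, Integrable (fun x => g k x * w x) μ) :
    ∫ x, (f x + ∑ k ∈ t, c k * g k x) * w x ∂μ =
      ∫ x, f x * w x ∂μ + ∑ k ∈ t, c k * ∫ x, g k x * w x ∂μ := by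
  simp only [add_mul, Finset.sum_mul, mul_assoc]
  rw [integral_add hf (integrable_finsetSum _ fun k hk => (hg k hk).const_mul (c k)),
    integral_finsetSum _ fun k hk => (hg k hk).const_mul (c k)]
  simp only [integral_const_mul]

end WeightedSum

theorem multimarket_densities_nonneg_iff_general
    {V : Type*} [Fintype V]
    (vp : V → ℝ) (hvp : ∀ m, vp m < 0)
    (μp lp : V → ℝ → ℝ) (p : V → V → ℝ → ℝ)
    (hμc : ∀ m, Continuous (μp m)) (hlc : ∀ m, Continuous (lp m))
    (hpc : ∀ k m, Continuous (p k m))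
    (hl0 : ∀ m r, 0 ≤ r → 0 ≤ lp m r)
    (hp0 : ∀ k m r, 0 ≤ r → 0 ≤ p k m r)
    (hls : ∀ m, HasCompactSupport (lp m))
    (hps : ∀ k m, HasCompactSupport (p k m))
    (s : V → ℝ) (hs : ∀ k, 0 ≤ s k) :
    let F : V → ℝ → ℝ := fun m x => -(vp m)⁻¹ * ∫ y in (0:ℝ)..x, μp m y
    let ρ : V → ℝ → ℝ := fun m r =>
      -(vp m)⁻¹ * Real.exp (F m r) *
        (s m - ∫ x in (0:ℝ)..r,
          (lp m x + ∑ k, s k * p k m x) * Real.exp (-F m x))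
    let lhat : V → ℝ := fun m => ∫ x in Ioi (0:ℝ), lp m x * Real.exp (-F m x)
    let α : V → V → ℝ := fun k m => ∫ x in Ioi (0:ℝ), p k m x * Real.exp (-F m x)
    (∀ m, ∀ r, 0 ≤ r → 0 ≤ ρ m r) ↔
      ∀ m, lhat m + ∑ k, s k * α k m ≤ s m := by
  intro F ρ lhat α
  refine forall_congr' fun m => ?_
  have hweight : Continuous fun x => exp (-F m x) :=
    (continuous_const.mul (intervalIntegral.continuous_primitive
      (hμc m).intervalIntegrable 0)).neg.rexp
  have hintegrableOn : ∀ f : ℝ → ℝ, Continuous f → HasCompactSupport f →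
      IntegrableOn (fun x => f x * exp (-F m x)) (Ioi 0) := fun f hf hfs =>
    ((hf.mul hweight).integrable_of_hasCompactSupport hfs.mul_right).integrableOn
  have hρ : ∀ r, 0 ≤ ρ m r ↔
      ∫ x in (0:ℝ)..r, (lp m x + ∑ k, s k * p k m x) * exp (-F m x) ≤ s m := fun r =>
    (mul_nonneg_iff_of_pos_left (mul_pos (neg_pos.2 (inv_lt_zero.2 (hvp m))) (exp_pos _))).trans
      sub_nonneg
  have hl := hintegrableOn _ (hlc m) (hls m)
  have hp : ∀ k ∈ (Finset.univ : Finset V), _ := fun k _ => hintegrableOn _ (hpc k m) (hps k m)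
  have hg0 : ∀ x, 0 < x → 0 ≤ (lp m x + ∑ k, s k * p k m x) * exp (-F m x) := fun x hx =>
    mul_nonneg (add_nonneg (hl0 m x hx.le)
      (sum_nonneg fun k _ => mul_nonneg (hs k) (hp0 k m x hx.le))) (exp_pos _).le
  simp only [hρ]
  rw [forall_intervalIntegral_le_iff_setIntegral_Ioi_le (integrable_add_sum_mul _ _ hl hp) hg0,
    integral_add_sum_mul _ _ hl hp]

/-- The multi-market stationary densities are nonnegative for all `r ≥ 0` and all
markets `m` if and only if `s_m ≥ λ̂₊,ₘ + ∑_k s_k α_{km}(−,+)` for all `m`. -/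
theorem multimarket_densities_nonneg_iff
    {V : Type*} [Fintype V]
    (vp : V → ℝ) (hvp : ∀ m, vp m < 0)
    (μp lp : V → ℝ → ℝ) (p : V → V → ℝ → ℝ)
    (hμc : ∀ m, Continuous (μp m)) (hlc : ∀ m, Continuous (lp m))
    (hpc : ∀ k m, Continuous (p k m))
    (hμ0 : ∀ m r, 0 ≤ r → 0 ≤ μp m r) (hl0 : ∀ m r, 0 ≤ r → 0 ≤ lp m r)
    (hp0 : ∀ k m r, 0 ≤ r → 0 ≤ p k m r)
    (hμs : ∀ m, HasCompactSupport (μp m)) (hls : ∀ m, HasCompactSupport (lp m))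
    (hps : ∀ k m, HasCompactSupport (p k m))
    (s : V → ℝ) (hs : ∀ k, 0 ≤ s k) :
    let F : V → ℝ → ℝ := fun m x => -(vp m)⁻¹ * ∫ y in (0:ℝ)..x, μp m y
    let ρ : V → ℝ → ℝ := fun m r =>
      -(vp m)⁻¹ * Real.exp (F m r) *
        (s m - ∫ x in (0:ℝ)..r,
          (lp m x + ∑ k, s k * p k m x) * Real.exp (-F m x))
    let lhat : V → ℝ := fun m => ∫ x in Ioi (0:ℝ), lp m x * Real.exp (-F m x)
    let α : V → V → ℝ := fun k m => ∫ x in Ioi (0:ℝ), p k m x * Real.exp (-F m x)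
    (∀ m, ∀ r, 0 ≤ r → 0 ≤ ρ m r) ↔
      ∀ m, lhat m + ∑ k, s k * α k m ≤ s m :=
  multimarket_densities_nonneg_iff_general vp hvp μp lp p hμc hlc hpc hl0 hp0 hls hps s hs
end

section
/- Let v > 0 and let μ, λ : [0,∞) → ℝ be continuous, nonnegative, with support in [0,R₀]. Any C¹ solution ρ : [0,∞) → ℝ of v ρ'(r) − μ(r)ρ(r) + λ(r) = 0 with ∫₀^∞ ρ(r)dr < ∞ and ρ ≥ 0 satisfies ρ(0) = v⁻¹∫₀^∞ λ(x) exp(−(1/v)∫₀ˣ μ(y)dy)dx. -/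
/-!
Beyond `R₀` the equation reduces to `v ρ' = 0`, so `ρ` is constant on `[R₀, ∞)`; a nonzero
constant is not integrable on a half-line, hence `ρ(R₀) = 0`. Multiplying by the integrating
factor `E(x) = exp(−(1/v)∫₀ˣ μ)` turns the equation into `(ρ E)' = −(1/v) λ E`, and integrating
over `[0, R₀]` (where `λ` is supported) gives `ρ(0) = ρ(0) E(0) = v⁻¹ ∫₀^{R₀} λ E`.
-/

open Real MeasureTheory Set

lemma eq_of_le_of_deriv_eq_zero_on_Ioi {f : ℝ → ℝ} {a x : ℝ} (hf : Differentiable ℝ f)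
    (hf' : ∀ y, a < y → deriv f y = 0) (hax : a ≤ x) : f x = f a := by
  rcases hax.eq_or_lt with rfl | hax
  · rfl
  obtain ⟨c, hc, hslope⟩ :=
    exists_deriv_eq_slope f hax hf.continuous.continuousOn hf.differentiableOn
  rw [hf' c hc.1, eq_comm, div_eq_zero_iff, sub_eq_zero] at hslope
  exact hslope.resolve_right (sub_ne_zero.2 hax.ne')

lemma eq_zero_of_integrableOn_Ioi_of_eq_const {f : ℝ → ℝ} {a c : ℝ}
    (hf : IntegrableOn f (Ioi a)) (hc : ∀ x, a < x → f x = c) : c = 0 := by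
  have hconst : IntegrableOn (fun _ => c) (Ioi a) :=
    hf.congr_fun (fun x hx => hc x hx) measurableSet_Ioi
  rcases (integrableOn_const_iff (by simp)).1 hconst with h | h
  · exact enorm_eq_zero.1 h
  · exact absurd h (by simp [Real.volume_Ioi])

lemma setIntegral_Ioi_eq_intervalIntegral {f : ℝ → ℝ} {a b : ℝ} (hab : a ≤ b)
    (hf : ∀ x, b < x → f x = 0) : ∫ x in Ioi a, f x = ∫ x in a..b, f x := by
  rw [intervalIntegral.integral_of_le hab]
  exact setIntegral_eq_of_subset_of_forall_sdiff_eq_zero measurableSet_Ioi Ioc_subset_Ioi_self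
    fun x hx => hf x (not_le.1 fun hxb => hx.2 ⟨hx.1, hxb⟩)

noncomputable def integratingFactor (v : ℝ) (μ : ℝ → ℝ) (x : ℝ) : ℝ :=
  Real.exp (-(1 / v) * ∫ y in (0:ℝ)..x, μ y)

section IntegratingFactor

variable {v : ℝ} {μ : ℝ → ℝ}

@[simp]
lemma integratingFactor_zero : integratingFactor v μ 0 = 1 := by
  simp [integratingFactor]

lemma hasDerivAt_integratingFactor (hμ : Continuous μ) (x : ℝ) :
    HasDerivAt (integratingFactor v μ) (integratingFactor v μ x * (-(1 / v) * μ x)) x :=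
  ((hμ.integral_hasStrictDerivAt 0 x).hasDerivAt.const_mul (-(1 / v))).exp

lemma continuous_integratingFactor (hμ : Continuous μ) : Continuous (integratingFactor v μ) :=
  continuous_iff_continuousAt.2 fun x => (hasDerivAt_integratingFactor hμ x).continuousAt

lemma hasDerivAt_mul_integratingFactor {lam ρ : ℝ → ℝ} {ρ' x : ℝ} (hv : v ≠ 0)
    (hμ : Continuous μ) (hρ : HasDerivAt ρ ρ' x) (hode : v * ρ' - μ x * ρ x + lam x = 0) :
    HasDerivAt (fun r => ρ r * integratingFactor v μ r)
      (-(1 / v) * (lam x * integratingFactor v μ x)) x := by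
  refine (hρ.mul (hasDerivAt_integratingFactor hμ x)).congr_deriv ?_
  have hρ' : ρ' = (μ x * ρ x - lam x) / v := by
    field_simp
    linarith
  rw [hρ']
  field_simp
  ring

lemma mul_integratingFactor_sub_eq_integral {lam ρ : ℝ → ℝ} {a b : ℝ} (hv : v ≠ 0)
    (hab : a ≤ b) (hμ : Continuous μ) (hlam : Continuous lam) (hρ : Differentiable ℝ ρ)
    (hode : ∀ x ∈ Icc a b, v * deriv ρ x - μ x * ρ x + lam x = 0) :
    ρ b * integratingFactor v μ b - ρ a * integratingFactor v μ a =
      -(1 / v) * ∫ x in a..b, lam x * integratingFactor v μ x := by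
  rw [← intervalIntegral.integral_const_mul, eq_comm]
  refine intervalIntegral.integral_eq_sub_of_hasDerivAt
    (f := fun r => ρ r * integratingFactor v μ r) (fun x hx => ?_) ?_
  · rw [uIcc_of_le hab] at hx
    exact hasDerivAt_mul_integratingFactor hv hμ (hρ x).hasDerivAt (hode x hx)
  · exact (continuous_const.mul
      (hlam.mul (continuous_integratingFactor hμ))).intervalIntegrable _ _

end IntegratingFactor

theorem finite_mass_forces_critical_boundary_value_general
    (v R₀ : ℝ) (hv : 0 < v) (hR₀ : 0 < R₀)
    (μ lam : ℝ → ℝ)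
    (hμc : Continuous μ) (hlc : Continuous lam)
    (hμs : ∀ r, r ∉ Icc (0:ℝ) R₀ → μ r = 0)
    (hls : ∀ r, r ∉ Icc (0:ℝ) R₀ → lam r = 0)
    (ρ : ℝ → ℝ) (hρ : ContDiff ℝ 1 ρ)
    (hode : ∀ r, 0 ≤ r → v * deriv ρ r - μ r * ρ r + lam r = 0)
    (hmass : IntegrableOn ρ (Ioi (0:ℝ))) :
    ρ 0 = v⁻¹ * ∫ x in Ioi (0:ℝ),
      lam x * Real.exp (-(1 / v) * ∫ y in (0:ℝ)..x, μ y) := by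
  have hρd : Differentiable ℝ ρ := hρ.differentiable one_ne_zero
  have outside {r : ℝ} (hr : R₀ < r) : r ∉ Icc (0:ℝ) R₀ := fun h => hr.not_ge h.2
  have hderiv (r : ℝ) (hr : R₀ < r) : deriv ρ r = 0 := by
    have h := hode r (hR₀.trans hr).le
    rw [hμs r (outside hr), hls r (outside hr)] at h
    simpa [hv.ne'] using h
  have hρR₀ : ρ R₀ = 0 :=
    eq_zero_of_integrableOn_Ioi_of_eq_const (hmass.mono_set (Ioi_subset_Ioi hR₀.le))
      fun x hx => eq_of_le_of_deriv_eq_zero_on_Ioi hρd hderiv hx.le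
  have hsol := mul_integratingFactor_sub_eq_integral hv.ne' hR₀.le hμc hlc hρd
    fun x hx => hode x hx.1
  rw [hρR₀, integratingFactor_zero, one_div] at hsol
  change ρ 0 = v⁻¹ * ∫ x in Ioi (0:ℝ), lam x * integratingFactor v μ x
  rw [setIntegral_Ioi_eq_intervalIntegral hR₀.le fun x hx => by simp [hls x (outside hx)]]
  linarith

/-- A nonnegative C¹ solution of `v ρ' − μ ρ + λ = 0` on `[0,∞)` with finite total mass
must have the critical boundary value
`ρ(0) = v⁻¹ ∫₀^∞ λ(x) exp(−(1/v)∫₀ˣ μ) dx`. -/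
theorem finite_mass_forces_critical_boundary_value
    (v R₀ : ℝ) (hv : 0 < v) (hR₀ : 0 < R₀)
    (μ lam : ℝ → ℝ)
    (hμc : Continuous μ) (hlc : Continuous lam)
    (hμ0 : ∀ r, 0 ≤ μ r) (hl0 : ∀ r, 0 ≤ lam r)
    (hμs : ∀ r, r ∉ Icc (0:ℝ) R₀ → μ r = 0)
    (hls : ∀ r, r ∉ Icc (0:ℝ) R₀ → lam r = 0)
    (ρ : ℝ → ℝ) (hρ : ContDiff ℝ 1 ρ)
    (hode : ∀ r, 0 ≤ r → v * deriv ρ r - μ r * ρ r + lam r = 0)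
    (hmass : IntegrableOn ρ (Ioi (0:ℝ)))
    (hρ0 : ∀ r, 0 ≤ r → 0 ≤ ρ r) :
    ρ 0 = v⁻¹ * ∫ x in Ioi (0:ℝ),
      lam x * Real.exp (-(1 / v) * ∫ y in (0:ℝ)..x, μ y) :=
  finite_mass_forces_critical_boundary_value_general v R₀ hv hR₀ μ lam hμc hlc hμs hls ρ hρ hode
    hmass
end
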